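/- For every w ∈ ℝ, the principal value integral (1/π)·∫_{-∞}^{∞} cos(x)/(w − x) dx equals sin(w); that is, the Hilbert transform of cosine is sine. -/

import Mathlib

/-!
Substituting `x = w ∓ t` folds the two halves of the truncated principal value into
`∫_ε^R (cos (w - t) - cos (w + t)) / t dt = 2 sin w ∫_ε^R sin t / t dt`, so everything rests on the
Dirichlet integral `∫_0^∞ sin t / t dt = π / 2`. For that, write `1 / t = ∫_0^∞ e^{-ts} ds` and
integrate over `t ∈ (0, R]` first: this gives `1 / (1 + s²)` up to a defect bounded by `e^{-Rs}`,
whose integral over `s > 0` is `1 / R`.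
-/

open intervalIntegral Filter Topology MeasureTheory Set Real

lemma abs_sin_div_self_le_one (t : ℝ) : |sin t / t| ≤ 1 := by
  rcases eq_or_ne t 0 with rfl | ht
  · simp
  · rw [← sinc_of_ne_zero ht]
    exact abs_sinc_le_one t

lemma intervalIntegrable_sin_div_self (a b : ℝ) :
    IntervalIntegrable (fun t => sin t / t) volume a b :=
  (intervalIntegrable_const (c := (1 : ℝ))).mono_fun
    (measurable_sin.div measurable_id).aestronglyMeasurable
    (ae_of_all _ fun t => by simpa only [norm_one, norm_eq_abs] using abs_sin_div_self_le_one t)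

lemma integral_Ioi_exp_neg_mul {t : ℝ} (ht : 0 < t) : ∫ s in Ioi 0, exp (-t * s) = t⁻¹ := by
  rw [integral_exp_mul_Ioi (neg_lt_zero.mpr ht)]
  simp

lemma integral_exp_neg_mul_mul_sin (s R : ℝ) :
    ∫ t in (0 : ℝ)..R, exp (-t * s) * sin t =
      (1 - exp (-R * s) * (s * sin R + cos R)) / (1 + s ^ 2) := by
  have hderiv : ∀ t, HasDerivAt (fun t => -(exp (-t * s) * (s * sin t + cos t)) / (1 + s ^ 2))
      (exp (-t * s) * sin t) t := fun t => by
    have hexp : HasDerivAt (fun t => exp (-t * s)) (exp (-t * s) * (-1 * s)) t :=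
      ((hasDerivAt_neg t).mul_const s).exp
    have htrig : HasDerivAt (fun t => s * sin t + cos t) (s * cos t + -sin t) t :=
      ((hasDerivAt_sin t).const_mul s).add (hasDerivAt_cos t)
    refine (((hexp.mul htrig).neg).div_const (1 + s ^ 2)).congr_deriv ?_
    field_simp
    ring
  rw [integral_eq_sub_of_hasDerivAt (fun t _ => hderiv t)
    ((by fun_prop : Continuous fun t => exp (-t * s) * sin t).intervalIntegrable _ _)]
  simp only [neg_zero, zero_mul, exp_zero, sin_zero, cos_zero]
  ring

lemma integrable_exp_neg_mul_mul_sin_prod (R : ℝ) :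
    Integrable (fun p : ℝ × ℝ => exp (-p.1 * p.2) * sin p.1)
      ((volume.restrict (Ioc 0 R)).prod (volume.restrict (Ioi 0))) := by
  have hmeas : AEStronglyMeasurable (fun p : ℝ × ℝ => exp (-p.1 * p.2) * sin p.1)
      ((volume.restrict (Ioc 0 R)).prod (volume.restrict (Ioi 0))) :=
    Continuous.aestronglyMeasurable (by fun_prop)
  refine (integrable_prod_iff hmeas).2 ⟨?_, ?_⟩
  · filter_upwards [ae_restrict_mem measurableSet_Ioc] with t ht
    exact (exp_neg_integrableOn_Ioi 0 ht.1).mul_const (sin t)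
  · refine (integrable_const (1 : ℝ)).mono' hmeas.norm.integral_prod_right' ?_
    filter_upwards [ae_restrict_mem measurableSet_Ioc] with t ht
    have hnorm : ∫ s in Ioi 0, ‖exp (-t * s) * sin t‖ = |sin t / t| := by
      simp_rw [norm_mul, norm_of_nonneg (exp_pos _).le]
      rw [MeasureTheory.integral_mul_const, integral_Ioi_exp_neg_mul ht.1, abs_div, abs_of_pos ht.1,
        norm_eq_abs, inv_mul_eq_div]
    rw [hnorm, norm_of_nonneg (abs_nonneg _)]
    exact abs_sin_div_self_le_one t

lemma integral_sin_div_self_eq_integral_Ioi {R : ℝ} (hR : 0 ≤ R) :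
    ∫ t in (0 : ℝ)..R, sin t / t =
      ∫ s in Ioi 0, (1 - exp (-R * s) * (s * sin R + cos R)) / (1 + s ^ 2) :=
  calc ∫ t in (0 : ℝ)..R, sin t / t = ∫ t in Ioc 0 R, ∫ s in Ioi 0, exp (-t * s) * sin t := by
        rw [integral_of_le hR]
        refine setIntegral_congr_fun measurableSet_Ioc fun t ht => ?_
        rw [MeasureTheory.integral_mul_const, integral_Ioi_exp_neg_mul ht.1, inv_mul_eq_div]
    _ = ∫ s in Ioi 0, ∫ t in Ioc 0 R, exp (-t * s) * sin t :=
        integral_integral_swap (integrable_exp_neg_mul_mul_sin_prod R)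
    _ = _ := by
        refine setIntegral_congr_fun measurableSet_Ioi fun s _ => ?_
        rw [← integral_of_le hR, integral_exp_neg_mul_mul_sin]

lemma norm_exp_neg_mul_mul_div_one_add_sq_le (R s : ℝ) :
    ‖exp (-R * s) * (s * sin R + cos R) / (1 + s ^ 2)‖ ≤ exp (-R * s) := by
  have hpos : 0 < 1 + s ^ 2 := by positivity
  -- Cauchy–Schwarz: `(s sin R + cos R)² ≤ 1 + s² ≤ (1 + s²)²`
  have hcs : |s * sin R + cos R| ≤ 1 + s ^ 2 := by
    refine abs_le_of_sq_le_sq' ?_ hpos.le |> abs_le.2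
    nlinarith [sin_sq_add_cos_sq R, sq_nonneg (s * cos R - sin R), sq_nonneg s]
  rw [norm_div, norm_mul, norm_of_nonneg (exp_pos _).le, norm_of_nonneg hpos.le, norm_eq_abs,
    div_le_iff₀ hpos]
  exact mul_le_mul_of_nonneg_left hcs (exp_pos _).le

theorem tendsto_integral_sin_div_self_atTop :
    Tendsto (fun R => ∫ t in (0 : ℝ)..R, sin t / t) atTop (𝓝 (π / 2)) := by
  set defect := fun R s : ℝ => exp (-R * s) * (s * sin R + cos R) / (1 + s ^ 2)
  have hdefect_int : ∀ R > 0, IntegrableOn (defect R) (Ioi 0) := fun R hR =>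
    (exp_neg_integrableOn_Ioi 0 hR).mono' (Measurable.aestronglyMeasurable (by fun_prop))
      (ae_of_all _ (norm_exp_neg_mul_mul_div_one_add_sq_le R))
  have hdefect_le : ∀ R > 0, ‖∫ s in Ioi 0, defect R s‖ ≤ R⁻¹ := fun R hR =>
    calc ‖∫ s in Ioi 0, defect R s‖ ≤ ∫ s in Ioi 0, exp (-R * s) :=
          norm_integral_le_of_norm_le (exp_neg_integrableOn_Ioi 0 hR)
            (ae_of_all _ (norm_exp_neg_mul_mul_div_one_add_sq_le R))
      _ = R⁻¹ := integral_Ioi_exp_neg_mul hR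
  have hdefect_lim : Tendsto (fun R => ∫ s in Ioi 0, defect R s) atTop (𝓝 0) :=
    squeeze_zero_norm' ((eventually_gt_atTop 0).mono hdefect_le) tendsto_inv_atTop_zero
  have heq : ∀ R > 0, ∫ t in (0 : ℝ)..R, sin t / t = π / 2 - ∫ s in Ioi 0, defect R s := by
    intro R hR
    rw [integral_sin_div_self_eq_integral_Ioi hR.le]
    simp_rw [sub_div, one_div]
    rw [integral_sub integrable_inv_one_add_sq.integrableOn (hdefect_int R hR),
      integral_Ioi_inv_one_add_sq, arctan_zero, sub_zero]
  have hlim := hdefect_lim.const_sub (π / 2)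
  rw [sub_zero] at hlim
  refine hlim.congr' ?_
  filter_upwards [eventually_gt_atTop 0] with R hR using (heq R hR).symm

theorem tendsto_integral_sin_div_self_atTop_prod_nhds_zero :
    Tendsto (fun p : ℝ × ℝ => ∫ t in p.2..p.1, sin t / t) (atTop ×ˢ 𝓝 0) (𝓝 (π / 2)) := by
  have hzero : Tendsto (fun ε => ∫ t in (0 : ℝ)..ε, sin t / t) (𝓝 0) (𝓝 0) := by
    simpa using (continuous_primitive intervalIntegrable_sin_div_self 0).tendsto 0
  have := (tendsto_integral_sin_div_self_atTop.comp tendsto_fst).sub (hzero.comp tendsto_snd)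
  rw [sub_zero] at this
  exact this.congr fun p => integral_interval_sub_left (intervalIntegrable_sin_div_self _ _)
    (intervalIntegrable_sin_div_self _ _)

lemma integral_div_sub_add_integral_div_sub {f : ℝ → ℝ} (hf : Continuous f) (w : ℝ) {ε R : ℝ}
    (hε : 0 < ε) (hR : 0 < R) :
    (∫ x in (w - R)..(w - ε), f x / (w - x)) + ∫ x in (w + ε)..(w + R), f x / (w - x) =
      ∫ t in ε..R, (f (w - t) - f (w + t)) / t := by
  have hne : ∀ t ∈ uIcc ε R, t ≠ 0 := fun t ht => ((lt_min hε hR).trans_le ht.1).ne'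
  have hint : ∀ g : ℝ → ℝ, Continuous g → IntervalIntegrable (fun t => g t / t) volume ε R :=
    fun g hg => (hg.continuousOn.div continuousOn_id hne).intervalIntegrable
  simp_rw [sub_div]
  rw [← integral_comp_sub_left (fun x => f x / (w - x)),
    ← integral_comp_add_left (fun x => f x / (w - x)),
    integral_sub (hint _ (by fun_prop)) (hint _ (by fun_prop))]
  simp only [sub_sub_cancel, sub_add_cancel_left, div_neg, intervalIntegral.integral_neg]
  ring

theorem hilbert_transform_cos (w : ℝ) :
    Tendsto
      (fun p : ℝ × ℝ =>
        (1 / Real.pi) *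
          ((∫ x in (w - p.1)..(w - p.2), Real.cos x / (w - x)) +
            ∫ x in (w + p.2)..(w + p.1), Real.cos x / (w - x)))
      (atTop ×ˢ 𝓝[>] 0) (𝓝 (Real.sin w)) := by
  have hcos : ∀ t, cos (w - t) - cos (w + t) = 2 * sin w * sin t := fun t => by
    rw [cos_sub, cos_add]
    ring
  have hlim : Tendsto (fun p : ℝ × ℝ => 1 / π * (2 * sin w * ∫ t in p.2..p.1, sin t / t))
      (atTop ×ˢ 𝓝[>] 0) (𝓝 (sin w)) := by
    convert ((tendsto_integral_sin_div_self_atTop_prod_nhds_zero.mono_left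
      (prod_mono le_rfl nhdsWithin_le_nhds)).const_mul (2 * sin w)).const_mul (1 / π) using 2
    field_simp
  refine hlim.congr' ?_
  filter_upwards [prod_mem_prod (eventually_gt_atTop 0) self_mem_nhdsWithin] with p ⟨hR, hε⟩
  rw [integral_div_sub_add_integral_div_sub continuous_cos w hε hR,
    ← intervalIntegral.integral_const_mul]
  simp_rw [hcos, mul_div_assoc]
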